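/- Let n ≥ 1, let μ be the Haar probability measure on SO(n), and let f(x) = ∫_{SO(n)} exp(tr(x·y)) dμ(y) be the Fisher integral on the space of n×n real matrices. Then for every n×n real matrix x: Σ_{σ ∈ S_n} sgn(σ) · (∂ⁿ f / ∂x_{1σ(1)} ∂x_{2σ(2)} ⋯ ∂x_{nσ(n)})(x) = f(x), where the sum ranges over all permutations σ of {1,…,n}, sgn(σ) is the sign of σ, and the operator is the n-fold iterated partial derivative in the matrix-entry coordinates x_{1σ(1)}, …, x_{nσ(n)}. -/

import Mathlib

open MeasureTheory Matrix

attribute [local instance] Matrix.normedAddCommGroup Matrix.normedSpace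

noncomputable instance matrixMeasurableSpace (n : ℕ) :
    MeasurableSpace (Matrix (Fin n) (Fin n) ℝ) := borel _

/-- The special orthogonal group `SO(n)`, viewed as a subset of the space of
`n × n` real matrices. -/
def SO (n : ℕ) : Set (Matrix (Fin n) (Fin n) ℝ) :=
  {y | yᵀ * y = 1 ∧ y.det = 1}

/-- `μ` is the Haar probability measure of `SO(n)`, viewed as a measure on the space of
`n × n` real matrices: it is a probability measure carried by `SO(n)` which is invariant
under left translation by elements of `SO(n)`. -/
structure IsHaarSO (n : ℕ) (μ : Measure (Matrix (Fin n) (Fin n) ℝ)) : Prop where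
  isProbabilityMeasure : IsProbabilityMeasure μ
  ae_mem : ∀ᵐ y ∂μ, y ∈ SO n
  left_invariant : ∀ a ∈ SO n, Measure.map (fun y => a * y) μ = μ

/-- The Fisher integral `f(x) = ∫_{SO(n)} exp(tr(x·y)) dμ(y)`, where
`tr(x·y) = Σᵢⱼ xᵢⱼ yᵢⱼ`. -/
noncomputable def fisher (n : ℕ) (μ : Measure (Matrix (Fin n) (Fin n) ℝ))
    (x : Matrix (Fin n) (Fin n) ℝ) : ℝ :=
  ∫ y, Real.exp (∑ i, ∑ j, x i j * y i j) ∂μ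

/-- The partial derivative operator `∂/∂x_{a b}` in the `(a,b)` matrix-entry coordinate. -/
noncomputable def pd {n : ℕ} (a b : Fin n) (g : Matrix (Fin n) (Fin n) ℝ → ℝ) :
    Matrix (Fin n) (Fin n) ℝ → ℝ :=
  fun x => fderiv ℝ g x (single a b 1)

/-!
Differentiation under the integral sign is legitimate because `μ` is a finite measure carried by
the bounded set `SO(n)`, and `∂/∂x_{ab}` multiplies the integrand `exp(tr(x·y))` by `y_{ab}`.
Hence the determinant operator multiplies it by `∑_σ sgn σ ∏ᵢ y_{iσ(i)} = det y`, which is `1`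
on `SO(n)`.
-/

open scoped ENNReal

section WeightedLaplace

open Real

variable {Ω E : Type*} [MeasurableSpace Ω] [NormedAddCommGroup E] [NormedSpace ℝ E]
  {μ : Measure Ω} {ℓ : Ω → E →L[ℝ] ℝ} {w : Ω → ℝ}

lemma MeasureTheory.MemLp.exists_ae_norm_le {F : Type*} [NormedAddCommGroup F] {f : Ω → F}
    (hf : MemLp f ∞ μ) : ∃ C, ∀ᵐ ω ∂μ, ‖f ω‖ ≤ C := by
  refine ⟨(eLpNorm f ∞ μ).toReal, ?_⟩
  filter_upwards [ae_le_eLpNormEssSup (f := f)] with ω hω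
  rw [← eLpNorm_exponent_top, ← ofReal_norm] at hω
  exact (ENNReal.ofReal_le_iff_le_toReal hf.eLpNorm_ne_top).1 hω

lemma exp_apply_le_exp_mul_norm {φ : E →L[ℝ] ℝ} {R : ℝ} (hφ : ‖φ‖ ≤ R) (x : E) :
    exp (φ x) ≤ exp (R * ‖x‖) :=
  exp_le_exp.2 <| (le_abs_self _).trans <| (φ.le_opNorm x).trans <|
    mul_le_mul_of_nonneg_right hφ (norm_nonneg x)

lemma MeasureTheory.MemLp.apply (hℓ : MemLp ℓ ∞ μ) (v : E) : MemLp (fun ω ↦ ℓ ω v) ∞ μ :=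
  (ContinuousLinearMap.apply ℝ ℝ v).comp_memLp' hℓ

lemma MeasureTheory.MemLp.exp_apply (hℓ : MemLp ℓ ∞ μ) (x : E) :
    MemLp (fun ω ↦ exp (ℓ ω x)) ∞ μ := by
  obtain ⟨R, hR⟩ := hℓ.exists_ae_norm_le
  refine memLp_top_of_bound (continuous_exp.comp_aestronglyMeasurable (hℓ.apply x).1)
    (exp (R * ‖x‖)) ?_
  filter_upwards [hR] with ω hω
  rw [norm_of_nonneg (exp_pos _).le]
  exact exp_apply_le_exp_mul_norm hω x

lemma MeasureTheory.MemLp.mul_exp_apply (hw : MemLp w ∞ μ) (hℓ : MemLp ℓ ∞ μ) (x : E) :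
    MemLp (fun ω ↦ w ω * exp (ℓ ω x)) ∞ μ :=
  MemLp.mul (r := ∞) (hℓ.exp_apply x) hw

lemma MeasureTheory.MemLp.prod_apply (hℓ : MemLp ℓ ∞ μ) {ι : Type*} (s : Finset ι)
    (v : ι → E) :
    MemLp (fun ω ↦ ∏ i ∈ s, ℓ ω (v i)) ∞ μ := by
  simpa using MemLp.prod' (p := fun _ ↦ ∞) fun i _ ↦ hℓ.apply (v i)

noncomputable def weightedLaplace (μ : Measure Ω) (ℓ : Ω → E →L[ℝ] ℝ) (w : Ω → ℝ) (x : E) :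
    ℝ :=
  ∫ ω, w ω * exp (ℓ ω x) ∂μ

lemma weightedLaplace_congr_ae {w' : Ω → ℝ} (h : w =ᵐ[μ] w') :
    weightedLaplace μ ℓ w = weightedLaplace μ ℓ w' :=
  funext fun _ ↦ integral_congr_ae <| h.mono fun ω hω ↦ by simp only [hω]

variable [IsFiniteMeasure μ]

lemma integrable_mul_exp_apply (hℓ : MemLp ℓ ∞ μ) (hw : MemLp w ∞ μ) (x : E) :
    Integrable (fun ω ↦ w ω * exp (ℓ ω x)) μ :=
  (hw.mul_exp_apply hℓ x).integrable le_top

lemma integrable_mul_exp_apply_smul (hℓ : MemLp ℓ ∞ μ) (hw : MemLp w ∞ μ) (x : E) :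
    Integrable (fun ω ↦ (w ω * exp (ℓ ω x)) • ℓ ω) μ :=
  (MemLp.smul (r := ∞) hℓ (hw.mul_exp_apply hℓ x)).integrable le_top

theorem hasFDerivAt_weightedLaplace (hℓ : MemLp ℓ ∞ μ) (hw : MemLp w ∞ μ) (x₀ : E) :
    HasFDerivAt (weightedLaplace μ ℓ w) (∫ ω, (w ω * exp (ℓ ω x₀)) • ℓ ω ∂μ) x₀ := by
  obtain ⟨R, hR⟩ := hℓ.exists_ae_norm_le
  obtain ⟨M, hM⟩ := hw.exists_ae_norm_le
  have h_bound : ∀ᵐ ω ∂μ, ∀ x ∈ Metric.ball x₀ 1,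
      ‖(w ω * exp (ℓ ω x)) • ℓ ω‖ ≤ M * exp (R * (‖x₀‖ + 1)) * R := by
    filter_upwards [hR, hM] with ω hRω hMω x hx
    have hR₀ : 0 ≤ R := (norm_nonneg _).trans hRω
    have hexp : exp (ℓ ω x) ≤ exp (R * (‖x₀‖ + 1)) :=
      (exp_apply_le_exp_mul_norm hRω x).trans <| exp_le_exp.2 <|
        mul_le_mul_of_nonneg_left (norm_le_norm_add_const_of_dist_le (le_of_lt hx)) hR₀
    rw [norm_smul, norm_mul, norm_of_nonneg (exp_pos _).le]
    have hM₀ : 0 ≤ M := (norm_nonneg _).trans hMω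
    gcongr
  refine hasFDerivAt_integral_of_dominated_of_fderiv_le (Metric.ball_mem_nhds x₀ one_pos)
    (.of_forall fun x ↦ (integrable_mul_exp_apply hℓ hw x).aestronglyMeasurable)
    (integrable_mul_exp_apply hℓ hw x₀)
    (integrable_mul_exp_apply_smul hℓ hw x₀).aestronglyMeasurable h_bound (integrable_const _)
    (.of_forall fun ω x _ ↦ ?_)
  simpa [smul_smul, mul_comm, mul_left_comm] using ((ℓ ω).hasFDerivAt.exp).const_mul (w ω)

theorem fderiv_weightedLaplace_apply (hℓ : MemLp ℓ ∞ μ) (hw : MemLp w ∞ μ) (x v : E) :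
    fderiv ℝ (weightedLaplace μ ℓ w) x v = weightedLaplace μ ℓ (fun ω ↦ ℓ ω v * w ω) x := by
  rw [(hasFDerivAt_weightedLaplace hℓ hw x).fderiv,
    ContinuousLinearMap.integral_apply (integrable_mul_exp_apply_smul hℓ hw x)]
  simp only [weightedLaplace, FunLike.coe_smul, Pi.smul_apply, smul_eq_mul]
  congr 1 with ω
  ring

lemma sum_mul_weightedLaplace (hℓ : MemLp ℓ ∞ μ) {ι : Type*} (s : Finset ι) (c : ι → ℝ)
    {w : ι → Ω → ℝ} (hw : ∀ i ∈ s, MemLp (w i) ∞ μ) (x : E) :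
    ∑ i ∈ s, c i * weightedLaplace μ ℓ (w i) x =
      weightedLaplace μ ℓ (fun ω ↦ ∑ i ∈ s, c i * w i ω) x := by
  simp only [weightedLaplace, ← integral_const_mul]
  rw [← integral_finsetSum s fun i hi ↦ (integrable_mul_exp_apply hℓ (hw i hi) x).const_mul (c i)]
  simp only [Finset.sum_mul, mul_assoc]

end WeightedLaplace

/-- The topology of `Matrix.normedAddCommGroup`. It equals the product topology only up to
unfolding, and `Matrix →L[ℝ] ℝ` carries its operator norm only when elaborated with this one. -/
noncomputable instance matrixNormTopology (n : ℕ) : TopologicalSpace (Matrix (Fin n) (Fin n) ℝ) :=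
  PseudoMetricSpace.toUniformSpace.toTopologicalSpace

instance matrixBorelSpace (n : ℕ) : BorelSpace (Matrix (Fin n) (Fin n) ℝ) := ⟨rfl⟩

noncomputable def frobeniusPairing (n : ℕ) :
    Matrix (Fin n) (Fin n) ℝ →L[ℝ] Matrix (Fin n) (Fin n) ℝ →L[ℝ] ℝ :=
  LinearMap.toContinuousLinearMap <| LinearMap.toContinuousLinearMap.toLinearMap ∘ₗ
    LinearMap.mk₂ ℝ (fun y x : Matrix (Fin n) (Fin n) ℝ ↦ ∑ i, ∑ j, x i j * y i j)
      (by simp [mul_add, Finset.sum_add_distrib]) (by simp [Finset.mul_sum, mul_left_comm])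
      (by simp [add_mul, Finset.sum_add_distrib]) (by simp [Finset.mul_sum, mul_assoc])

lemma frobeniusPairing_apply {n : ℕ} (y x : Matrix (Fin n) (Fin n) ℝ) :
    frobeniusPairing n y x = ∑ i, ∑ j, x i j * y i j := rfl

lemma frobeniusPairing_single {n : ℕ} (y : Matrix (Fin n) (Fin n) ℝ) (a b : Fin n) :
    frobeniusPairing n y (single a b 1) = y a b := by
  simp [frobeniusPairing_apply, single, ite_and, Finset.sum_ite_eq]

lemma norm_le_one_of_mem_SO {n : ℕ} {y : Matrix (Fin n) (Fin n) ℝ} (hy : y ∈ SO n) : ‖y‖ ≤ 1 := by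
  refine entrywise_sup_norm_bound_of_unitary (mem_unitaryGroup_iff'.2 ?_)
  rw [star_eq_conjTranspose, conjTranspose_eq_transpose_of_trivial, hy.1]

lemma memLp_top_frobeniusPairing {n : ℕ} {μ : Measure (Matrix (Fin n) (Fin n) ℝ)}
    (hμ : ∀ᵐ y ∂μ, y ∈ SO n) : MemLp (frobeniusPairing n) ∞ μ :=
  memLp_top_of_bound (frobeniusPairing n).continuous.aestronglyMeasurable ‖frobeniusPairing n‖ <|
    hμ.mono fun _ hy ↦
      (frobeniusPairing n).le_opNorm_of_le (norm_le_one_of_mem_SO hy) |>.trans_eq (mul_one _)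

lemma fisher_eq_weightedLaplace (n : ℕ) (μ : Measure (Matrix (Fin n) (Fin n) ℝ)) :
    fisher n μ = weightedLaplace μ (frobeniusPairing n) 1 := by
  ext x
  simp [fisher, weightedLaplace, frobeniusPairing_apply]

section PartialDerivatives

variable {n : ℕ} {Ω : Type*} [MeasurableSpace Ω] {μ : Measure Ω} [IsFiniteMeasure μ]
  {ℓ : Ω → Matrix (Fin n) (Fin n) ℝ →L[ℝ] ℝ} {w : Ω → ℝ}

lemma pd_weightedLaplace (hℓ : MemLp ℓ ∞ μ) (hw : MemLp w ∞ μ) (a b : Fin n) :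
    pd a b (weightedLaplace μ ℓ w) = weightedLaplace μ ℓ (fun ω ↦ ℓ ω (single a b 1) * w ω) :=
  funext fun x ↦ fderiv_weightedLaplace_apply hℓ hw x _

theorem foldr_pd_weightedLaplace (hℓ : MemLp ℓ ∞ μ) (hw : MemLp w ∞ μ) {k : ℕ}
    (a b : Fin k → Fin n) :
    (List.ofFn fun i ↦ pd (a i) (b i)).foldr (· ∘ ·) id (weightedLaplace μ ℓ w) =
      weightedLaplace μ ℓ (fun ω ↦ (∏ i, ℓ ω (single (a i) (b i) 1)) * w ω) := by
  induction k with
  | zero => simp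
  | succ k ih =>
    rw [List.ofFn_succ, List.foldr_cons, Function.comp_apply, ih,
      pd_weightedLaplace hℓ (hw.mul' (hℓ.prod_apply _ _))]
    simp_rw [Fin.prod_univ_succ, mul_assoc]

end PartialDerivatives

theorem fisher_annihilated_by_determinant_operator_general (n : ℕ)
    (μ : Measure (Matrix (Fin n) (Fin n) ℝ)) (hμ : IsHaarSO n μ)
    (x : Matrix (Fin n) (Fin n) ℝ) :
    ∑ σ : Equiv.Perm (Fin n), ((Equiv.Perm.sign σ : ℤ) : ℝ) *
      ((List.ofFn fun i : Fin n => pd i (σ i)).foldr (· ∘ ·) id (fisher n μ)) x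
      = fisher n μ x := by
  have := hμ.isProbabilityMeasure
  have hℓ := memLp_top_frobeniusPairing hμ.ae_mem
  have hdet (y : Matrix (Fin n) (Fin n) ℝ) :
      ∑ σ : Equiv.Perm (Fin n), ((Equiv.Perm.sign σ : ℤ) : ℝ) * ∏ i, y i (σ i) = y.det := by
    rw [← det_transpose, det_apply']
    rfl
  calc _ = ∑ σ : Equiv.Perm (Fin n), ((Equiv.Perm.sign σ : ℤ) : ℝ) * weightedLaplace μ
          (frobeniusPairing n) (fun y ↦ ∏ i, frobeniusPairing n y (single i (σ i) 1)) x := by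
        simp_rw [fisher_eq_weightedLaplace,
          foldr_pd_weightedLaplace (w := 1) hℓ (memLp_top_const 1) (fun i ↦ i), Pi.one_apply,
          mul_one]
    _ = weightedLaplace μ (frobeniusPairing n) (fun y ↦ ∑ σ : Equiv.Perm (Fin n),
          ((Equiv.Perm.sign σ : ℤ) : ℝ) * ∏ i, frobeniusPairing n y (single i (σ i) 1)) x :=
        sum_mul_weightedLaplace hℓ _ _ (fun σ _ ↦ hℓ.prod_apply _ _) x
    _ = weightedLaplace μ (frobeniusPairing n) 1 x := by
        refine congrFun (weightedLaplace_congr_ae (hμ.ae_mem.mono fun y hy ↦ ?_)) x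
        simp only [frobeniusPairing_single, hdet, hy.2, Pi.one_apply]
    _ = fisher n μ x := by rw [fisher_eq_weightedLaplace]

theorem fisher_annihilated_by_determinant_operator (n : ℕ) (hn : 1 ≤ n)
    (μ : Measure (Matrix (Fin n) (Fin n) ℝ)) (hμ : IsHaarSO n μ)
    (x : Matrix (Fin n) (Fin n) ℝ) :
    ∑ σ : Equiv.Perm (Fin n), ((Equiv.Perm.sign σ : ℤ) : ℝ) *
      ((List.ofFn fun i : Fin n => pd i (σ i)).foldr (· ∘ ·) id (fisher n μ)) x
      = fisher n μ x :=
  fisher_annihilated_by_determinant_operator_general n μ hμ x
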